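/- arXiv:2201.06127 — 5 statements merged into one kernel-verified Lean document; each statement's English description precedes it below -/
import Mathlib

section
/- Let G be a finite graph, let λ > 0 and β ∈ [0,∞), and set p := 1 − e^{−β}. Then for every integer k ≥ 1, Z_k(G, λ, β) = 𝔼[ Z(G_p, λ)^k ], where G_p is the random subgraph of G obtained by retaining each edge independently with probability p. -/
open scoped Classical
open Filter

noncomputable section

/-- The `d`-dimensional hypercube graph on `{0,1}^d`: vertices are functions `Fin d → Bool`,
two vertices being adjacent iff they differ in exactly one coordinate. -/
def hypercube (d : ℕ) : SimpleGraph (Fin d → Bool) where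
  Adj u v := (Finset.univ.filter fun i => u i ≠ v i).card = 1
  symm := by
    constructor
    intro u v h
    have hset : (Finset.univ.filter fun i => v i ≠ u i)
        = (Finset.univ.filter fun i => u i ≠ v i) := by
      apply Finset.filter_congr
      intro i _
      exact ne_comm
    rw [hset]
    exact h
  loopless := by
    constructor
    intro u h
    simp at h

/-- The collection of independent sets of a finite graph, as a `Finset` of `Finset`s. -/
def indepFinsets {V : Type*} [Fintype V] (G : SimpleGraph V) : Finset (Finset V) :=
  Finset.univ.filter fun s => ∀ u ∈ s, ∀ v ∈ s, ¬ G.Adj u v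

/-- The number of independent sets of a finite graph. -/
def numIndep {V : Type*} [Fintype V] (G : SimpleGraph V) : ℕ :=
  (indepFinsets G).card

/-- The hard-core partition function `Z(G,λ) = Σ_{I independent} λ^{|I|}`. -/
def hcZ {V : Type*} [Fintype V] (G : SimpleGraph V) (lam : ℝ) : ℝ :=
  ∑ s ∈ indepFinsets G, lam ^ s.card

/-- The edge set of a finite graph, as a `Finset`. -/
def edgeFins {V : Type*} [Fintype V] (G : SimpleGraph V) : Finset (Sym2 V) :=
  Finset.univ.filter fun e => e ∈ G.edgeSet

/-- Expectation of `f` applied to the random subgraph `G_p` of `G`, in which each edge of `G`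
is retained independently with probability `p`. -/
def rsExp {V : Type*} [Fintype V] (G : SimpleGraph V) (p : ℝ) (f : SimpleGraph V → ℝ) : ℝ :=
  ∑ ω ∈ (edgeFins G).powerset,
    p ^ ω.card * (1 - p) ^ ((edgeFins G).card - ω.card) * f (SimpleGraph.fromEdgeSet (↑ω : Set (Sym2 V)))

/-- Probability that the random subgraph `G_p` of `G` satisfies the property `P`. -/
def rsProb {V : Type*} [Fintype V] (G : SimpleGraph V) (p : ℝ) (P : SimpleGraph V → Prop) : ℝ :=
  ∑ ω ∈ (edgeFins G).powerset.filter
      (fun s : Finset (Sym2 V) => P (SimpleGraph.fromEdgeSet (↑s : Set (Sym2 V)))),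
    p ^ ω.card * (1 - p) ^ ((edgeFins G).card - ω.card)

/-- `𝔼 i(Q_{d,p})`, the expected number of independent sets of `Q_{d,p}`. -/
def iE (d : ℕ) (p : ℝ) : ℝ :=
  rsExp (hypercube d) p fun G => (numIndep G : ℝ)

/-- The edges of `G` spanned by the vertex set `s`, i.e. `E(s)`. -/
def spanEdges {V : Type*} [Fintype V] (G : SimpleGraph V) (s : Finset V) : Finset (Sym2 V) :=
  (edgeFins G).filter fun e => ∀ v ∈ e, v ∈ s

/-- The partition function `Z_k(G,λ,β)` of the `k`-system. -/
def Zk {V : Type*} [Fintype V] (G : SimpleGraph V) (lam beta : ℝ) (k : ℕ) : ℝ :=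
  ∑ I : Fin k → Finset V,
    lam ^ (∑ i, (I i).card) *
      Real.exp (-beta * ((Finset.univ.biUnion fun i => spanEdges G (I i)).card : ℝ))

/-!
Expanding `Z(G_p, λ)^k` as a sum over `k`-tuples of vertex sets and exchanging sum and
expectation, the tuple `(I_1, …, I_k)` contributes `λ^{Σ |I_i|}` times the probability that every
`I_i` is independent in `G_p`, i.e. that no edge of `U = E(I_1) ∪ ⋯ ∪ E(I_k)` is retained.
That probability is `(1 - p)^{|U|} = e^{-β |U|}`, the weight of the tuple in `Z_k`.
-/

section

variable {V : Type*} [Fintype V]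

theorem sum_powerset_disjoint_pow_mul_pow {α R : Type*} [DecidableEq α] [CommSemiring R]
    {F U : Finset α} (hU : U ⊆ F) {p q : R} (hpq : p + q = 1) :
    ∑ ω ∈ F.powerset with Disjoint ω U, p ^ ω.card * q ^ (F.card - ω.card) = q ^ U.card := by
  have hfilter : {ω ∈ F.powerset | Disjoint ω U} = (F \ U).powerset := by
    ext ω
    simp only [Finset.mem_filter, Finset.mem_powerset, Finset.subset_sdiff]
  have hcard : (F \ U).card + U.card = F.card := Finset.card_sdiff_add_card_eq_card hU
  rw [hfilter]
  calc ∑ ω ∈ (F \ U).powerset, p ^ ω.card * q ^ (F.card - ω.card)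
      = ∑ ω ∈ (F \ U).powerset, p ^ ω.card * q ^ ((F \ U).card - ω.card) * q ^ U.card := by
        refine Finset.sum_congr rfl fun ω hω => ?_
        have : ω.card ≤ (F \ U).card := Finset.card_le_card (Finset.mem_powerset.mp hω)
        rw [mul_assoc, ← pow_add]
        congr 2
        omega
    _ = q ^ U.card := by
        rw [← Finset.sum_mul, Finset.sum_pow_mul_eq_add_pow, hpq, one_pow, one_mul]

theorem mem_indepFinsets_fromEdgeSet_iff {G : SimpleGraph V} {ω : Finset (Sym2 V)}
    (hω : ω ⊆ edgeFins G) {s : Finset V} :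
    s ∈ indepFinsets (SimpleGraph.fromEdgeSet (ω : Set (Sym2 V))) ↔
      Disjoint ω (spanEdges G s) := by
  simp only [indepFinsets, spanEdges, Finset.mem_filter, Finset.mem_univ, true_and,
    Finset.disjoint_left, SimpleGraph.fromEdgeSet_adj, Finset.mem_coe]
  constructor
  · rintro h e he ⟨-, hes⟩
    induction e using Sym2.ind with
    | _ u v =>
      have hGuv : G.Adj u v := by simpa [edgeFins] using hω he
      exact h u (hes u (Sym2.mem_mk_left u v)) v (hes v (Sym2.mem_mk_right u v)) ⟨he, hGuv.ne⟩
  · rintro h u hu v hv ⟨huv, -⟩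
    refine h huv ⟨hω huv, fun w hw => ?_⟩
    rcases Sym2.mem_iff.mp hw with rfl | rfl
    exacts [hu, hv]

theorem hcZ_pow_eq_sum_ite (H : SimpleGraph V) (lam : ℝ) (k : ℕ) :
    hcZ H lam ^ k = ∑ I : Fin k → Finset V,
      if ∀ i, I i ∈ indepFinsets H then lam ^ (∑ i, (I i).card) else 0 := by
  rw [← Fin.prod_const, hcZ, Finset.prod_univ_sum, ← Finset.sum_filter]
  refine Finset.sum_congr (by ext I; simp [Fintype.mem_piFinset]) fun I _ => ?_
  exact Finset.prod_pow_eq_pow_sum _ _ _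

theorem rsExp_sum_ite {ι : Type*} (G : SimpleGraph V) (p : ℝ) (J : Finset ι)
    (P : ι → SimpleGraph V → Prop) [∀ j H, Decidable (P j H)] (c : ι → ℝ) :
    rsExp G p (fun H => ∑ j ∈ J, if P j H then c j else 0) = ∑ j ∈ J, c j * rsProb G p (P j) := by
  simp only [rsExp, rsProb, Finset.mul_sum]
  rw [Finset.sum_comm]
  refine Finset.sum_congr rfl fun j _ => ?_
  rw [Finset.sum_filter]
  refine Finset.sum_congr rfl fun ω _ => ?_
  split_ifs <;> ring

theorem rsProb_forall_mem_indepFinsets {ι : Type*} [Fintype ι] (G : SimpleGraph V) (p : ℝ)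
    (I : ι → Finset V) :
    rsProb G p (fun H => ∀ i, I i ∈ indepFinsets H) =
      (1 - p) ^ (Finset.univ.biUnion fun i => spanEdges G (I i)).card := by
  have hU : (Finset.univ.biUnion fun i => spanEdges G (I i)) ⊆ edgeFins G :=
    Finset.biUnion_subset.mpr fun i _ => Finset.filter_subset _ _
  rw [rsProb, ← sum_powerset_disjoint_pow_mul_pow hU (add_sub_cancel p 1)]
  refine Finset.sum_congr (Finset.ext fun ω => ?_) fun _ _ => rfl
  simp only [Finset.mem_filter, Finset.mem_powerset, Finset.disjoint_biUnion_right,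
    Finset.mem_univ, true_implies]
  exact and_congr_right fun hω => forall_congr' fun i => mem_indepFinsets_fromEdgeSet_iff hω

end

theorem statement7_general {V : Type*} [Fintype V] (G : SimpleGraph V) (lam beta : ℝ) (k : ℕ) :
    Zk G lam beta k = rsExp G (1 - Real.exp (-beta)) fun H => (hcZ H lam) ^ k := by
  have hexp (n : ℕ) : Real.exp (-beta * n) = (1 - (1 - Real.exp (-beta))) ^ n := by
    rw [sub_sub_cancel, mul_comm, Real.exp_nat_mul]
  simp_rw [hcZ_pow_eq_sum_ite]
  rw [rsExp_sum_ite G _ _ fun (I : Fin k → Finset V) H => ∀ i, I i ∈ indepFinsets H]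
  simp only [Zk, rsProb_forall_mem_indepFinsets, hexp]

theorem statement7 {V : Type*} [Fintype V] (G : SimpleGraph V) (lam beta : ℝ)
    (hlam : 0 < lam) (hbeta : 0 ≤ beta) (k : ℕ) (hk : 1 ≤ k) :
    Zk G lam beta k = rsExp G (1 - Real.exp (-beta)) fun H => (hcZ H lam) ^ k :=
  statement7_general G lam beta k
end
end

section
/- For all integers d ≥ 1, k ≥ 1, all λ > 0, β ≥ 0, and every polymer γ = (A₁,…,A_k), the weight satisfies ω(γ) ≤ λ^{‖γ‖} · (α̃_k)^{‖N(γ)‖}, where ‖γ‖ := |A₁|+⋯+|A_k|, ‖N(γ)‖ := |N(A₁)|+⋯+|N(A_k)|, α_k := (1 + ((1+λ)^k − 1)e^{−β})/(1+λ)^k and α̃_k := α_k^{1/k}. -/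
open scoped Classical
open Filter

noncomputable section

/-- The neighborhood `N(A)` of a vertex set `A` in `G`. -/
def nbhd {V : Type*} [Fintype V] (G : SimpleGraph V) (A : Finset V) : Finset V :=
  Finset.univ.filter fun v => ∃ u ∈ A, G.Adj u v

/-- The closure `[A] = {v : N(v) ⊆ N(A)}` of a vertex set `A` in `G`. -/
def vClosure {V : Type*} [Fintype V] (G : SimpleGraph V) (A : Finset V) : Finset V :=
  Finset.univ.filter fun v => ∀ w, G.Adj v w → w ∈ nbhd G A

/-- The even vertices of the hypercube. -/
def evenV (d : ℕ) : Finset (Fin d → Bool) :=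
  Finset.univ.filter fun v => (Finset.univ.filter fun i => v i = true).card % 2 = 0

/-- The odd vertices of the hypercube. -/
def oddV (d : ℕ) : Finset (Fin d → Bool) :=
  Finset.univ.filter fun v => (Finset.univ.filter fun i => v i = true).card % 2 = 1

/-- The edges of `G` with one endpoint in `A` and the other in `B`, i.e. `E(A,B)`. -/
def crossEdges {V : Type*} [Fintype V] (G : SimpleGraph V) (A B : Finset V) : Finset (Sym2 V) :=
  (edgeFins G).filter fun e => ∃ u ∈ A, ∃ v ∈ B, e = s(u, v)

/-- The graph `H_γ` associated to a tuple `γ = (A₁, …, A_k)` of vertex sets of `Q_d`. -/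
def polymerGraph (d k : ℕ) (A : Fin k → Finset (Fin d → Bool)) :
    SimpleGraph ((i : Fin k) × {u : Fin d → Bool // u ∈ A i}) where
  Adj x y :=
    (x.1 = y.1 ∧ (hypercube d).dist x.2.1 y.2.1 = 2) ∨
      (x.1 ≠ y.1 ∧ (hypercube d).dist x.2.1 y.2.1 ≤ 1)
  symm := by
    constructor
    rintro x y (⟨h1, h2⟩ | ⟨h1, h2⟩)
    · exact Or.inl ⟨h1.symm, by rwa [SimpleGraph.dist_comm]⟩
    · exact Or.inr ⟨fun h => h1 h.symm, by rwa [SimpleGraph.dist_comm]⟩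
  loopless := by
    constructor
    rintro x (⟨h1, h2⟩ | ⟨h1, h2⟩)
    · simp [SimpleGraph.dist_self] at h2
    · exact h1 rfl

/-- `γ = (A₁, …, A_k)` is a polymer: each `A_i` lies in one side of the hypercube, each
closure `[A_i]` has size at most `(3/4)·2^{d−1}`, and `H_γ` is connected. -/
def IsPolymer (d k : ℕ) (A : Fin k → Finset (Fin d → Bool)) : Prop :=
  (∀ i, A i ⊆ evenV d ∨ A i ⊆ oddV d) ∧
  (∀ i, ((vClosure (hypercube d) (A i)).card : ℝ) ≤ (3 / 4) * 2 ^ (d - 1)) ∧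
  (polymerGraph d k A).Connected

/-- The weight `ω(γ)` of a polymer `γ = (A₁, …, A_k)`. -/
def polymerWeight (d k : ℕ) (lam beta : ℝ) (A : Fin k → Finset (Fin d → Bool)) : ℝ :=
  ∑ B ∈ (Finset.univ : Finset (Fin k → Finset (Fin d → Bool))).filter
      (fun B => ∀ i, B i ⊆ nbhd (hypercube d) (A i)),
    lam ^ ((∑ i, (A i).card) + ∑ i, (B i).card) /
        (1 + lam) ^ (∑ i, (nbhd (hypercube d) (A i)).card) *
      Real.exp (-beta *
        ((Finset.univ.biUnion fun i => crossEdges (hypercube d) (A i) (B i)).card : ℝ))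

/-!
Write `q = e^{-β}`. The factor `q^{|E|}` is the probability that a random edge set `η`, containing
each edge independently with probability `1 - q`, misses `E`. Given `η`, the sum over
`(B₁, …, B_k)` factorizes, the `i`-th factor being `(1 + λ)^m` with `m` the number of vertices of
`N(A_i)` joined to `A_i` by no edge of `η`. Hölder's inequality with `k` equal exponents separates
the factors, and the `k`-th moment of each is computed by expanding
`((1 + λ)^k)^m = Σ_{S} ((1 + λ)^k - 1)^{|S|}`: a set `S ⊆ N(A_i)` survives with probability
`q^{|E(A_i, S)|} ≤ q^{|S|}`, because `A_i` and `N(A_i)` lie on opposite sides of `Q_d`.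
-/

open Finset

section RandomSubset

variable {β : Type*}

lemma sum_powerset_pow_card {R : Type*} [CommSemiring R] (a : R) (s : Finset β) :
    ∑ t ∈ s.powerset, a ^ #t = (1 + a) ^ #s := by
  simpa using (prod_one_add (f := fun _ => a) s).symm

/-- The probability that a random subset of `F`, containing each element independently with
probability `1 - q`, equals `η`. -/
def subsetLaw (F : Finset β) (q : ℝ) (η : Finset β) : ℝ :=
  (1 - q) ^ #η * q ^ (#F - #η)

lemma subsetLaw_nonneg (F : Finset β) {q : ℝ} (hq0 : 0 ≤ q) (hq1 : q ≤ 1) (η : Finset β) :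
    0 ≤ subsetLaw F q η :=
  mul_nonneg (pow_nonneg (sub_nonneg.2 hq1) _) (pow_nonneg hq0 _)

lemma sum_subsetLaw_filter_disjoint [DecidableEq β] {F S : Finset β} (hS : S ⊆ F) (q : ℝ) :
    ∑ η ∈ F.powerset with Disjoint S η, subsetLaw F q η = q ^ #S := by
  have hfilter : {η ∈ F.powerset | Disjoint S η} = (F \ S).powerset := by
    ext η
    simp only [mem_filter, mem_powerset, subset_sdiff, disjoint_comm]
  have hcard : #(F \ S) = #F - #S := card_sdiff_of_subset hS
  have hSF : #S ≤ #F := card_le_card hS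
  rw [hfilter]
  calc ∑ η ∈ (F \ S).powerset, subsetLaw F q η
      = ∑ η ∈ (F \ S).powerset, q ^ #S * ((1 - q) ^ #η * q ^ (#(F \ S) - #η)) := by
        refine sum_congr rfl fun η hη => ?_
        have hη : #η ≤ #(F \ S) := card_le_card (mem_powerset.1 hη)
        rw [subsetLaw, show #F - #η = #S + (#(F \ S) - #η) by omega, pow_add]
        ring
    _ = q ^ #S := by rw [← mul_sum, sum_pow_mul_eq_add_pow, sub_add_cancel, one_pow, mul_one]

end RandomSubset

theorem sum_mul_prod_le_prod_Lp {α : Type*} (s : Finset α) {k : ℕ} (hk : k ≠ 0)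
    (w : α → ℝ) (g : Fin k → α → ℝ) (hw : ∀ x ∈ s, 0 ≤ w x)
    (hg : ∀ i, ∀ x ∈ s, 0 ≤ g i x) :
    ∑ x ∈ s, w x * ∏ i, g i x ≤ ∏ i, (∑ x ∈ s, w x * g i x ^ k) ^ (1 / k : ℝ) := by
  set M : Fin k → ℝ := fun i => ∑ x ∈ s, w x * g i x ^ k
  have hM : ∀ i, 0 ≤ M i := fun i =>
    sum_nonneg fun x hx => mul_nonneg (hw x hx) (pow_nonneg (hg i x hx) k)
  by_cases! hzero : ∃ i, M i = 0
  · obtain ⟨i, hi⟩ := hzero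
    have hterm : ∀ x ∈ s, w x * g i x ^ k = 0 := (sum_eq_zero_iff_of_nonneg fun x hx =>
      mul_nonneg (hw x hx) (pow_nonneg (hg i x hx) k)).1 hi
    calc ∑ x ∈ s, w x * ∏ i, g i x = 0 := sum_eq_zero fun x hx => by
          rcases mul_eq_zero.1 (hterm x hx) with h | h
          · rw [h, zero_mul]
          · rw [prod_eq_zero (mem_univ i) (pow_eq_zero_iff hk |>.1 h), mul_zero]
      _ ≤ _ := prod_nonneg fun i _ => Real.rpow_nonneg (hM i) _
  have hMpos : ∀ i, 0 < M i := fun i => (hM i).lt_of_ne' (hzero i)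
  set P := ∏ i, M i ^ (1 / k : ℝ)
  have hP : 0 < P := prod_pos fun i _ => Real.rpow_pos_of_pos (hMpos i) _
  -- AM-GM applied to the normalized values `g i x ^ k / M i`, with equal weights `1 / k`
  have amgm : ∀ x ∈ s, ∏ i, g i x ≤ P * ∑ i, (1 / k : ℝ) * (g i x ^ k / M i) := by
    intro x hx
    have h := Real.geom_mean_le_arith_mean_weighted univ (fun _ => (1 / k : ℝ))
      (fun i => g i x ^ k / M i) (fun _ _ => by positivity) (by simp [hk])
      (fun i _ => div_nonneg (pow_nonneg (hg i x hx) k) (hM i))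
    have hgeom : ∏ i, (g i x ^ k / M i) ^ (1 / k : ℝ) = (∏ i, g i x) / P := by
      rw [← prod_div_distrib]
      refine prod_congr rfl fun i _ => ?_
      rw [Real.div_rpow (pow_nonneg (hg i x hx) k) (hM i), one_div,
        Real.pow_rpow_inv_natCast (hg i x hx) hk]
    rwa [hgeom, div_le_iff₀' hP] at h
  calc ∑ x ∈ s, w x * ∏ i, g i x
      ≤ ∑ x ∈ s, w x * (P * ∑ i, (1 / k : ℝ) * (g i x ^ k / M i)) :=
        sum_le_sum fun x hx => mul_le_mul_of_nonneg_left (amgm x hx) (hw x hx)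
    _ = P * ∑ i, (1 / k : ℝ) * (M i / M i) := by
        simp only [M, mul_sum, sum_div]
        rw [sum_comm]
        refine sum_congr rfl fun i _ => sum_congr rfl fun x _ => ?_
        ring
    _ = P := by simp [div_self (hMpos _).ne', hk]

section CrossEdges

variable {V : Type*} [Fintype V] (G : SimpleGraph V)

lemma crossEdges_subset_edgeFins (A B : Finset V) : crossEdges G A B ⊆ edgeFins G :=
  filter_subset _ _

lemma card_le_card_crossEdges {A S : Finset V} (hS : S ⊆ nbhd G A) (hAS : Disjoint A S) :
    #S ≤ #(crossEdges G A S) := by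
  have hnbr : ∀ v ∈ S, ∃ u ∈ A, G.Adj u v := fun v hv => by simpa [nbhd] using hS hv
  choose! f hfA hfadj using hnbr
  refine card_le_card_of_injOn (fun v => s(f v, v)) (fun v hv => ?_) fun v hv v' hv' he => ?_
  · show s(f v, v) ∈ crossEdges G A S
    simp only [crossEdges, edgeFins, mem_filter, mem_univ, true_and, SimpleGraph.mem_edgeSet]
    exact ⟨hfadj v hv, f v, hfA v hv, v, hv, rfl⟩
  · rcases Sym2.eq_iff.1 he with ⟨-, h⟩ | ⟨h, -⟩
    · exact h
    · exact absurd (h ▸ hfA v hv) (disjoint_right.1 hAS hv')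

lemma disjoint_crossEdges_iff {A B : Finset V} {η : Finset (Sym2 V)} :
    Disjoint (crossEdges G A B) η ↔ ∀ v ∈ B, Disjoint (crossEdges G A {v}) η := by
  have hunion : crossEdges G A B = B.biUnion fun v => crossEdges G A {v} := by
    ext e
    simp only [crossEdges, mem_biUnion, mem_filter, mem_singleton]
    aesop
  rw [hunion, disjoint_biUnion_left]

variable [DecidableEq V]

def unblockedNbhd (A : Finset V) (η : Finset (Sym2 V)) : Finset V :=
  {v ∈ nbhd G A | Disjoint (crossEdges G A {v}) η}

lemma sum_pow_card_filter_disjoint_crossEdges (a : ℝ) (A : Finset V) (η : Finset (Sym2 V)) :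
    ∑ B ∈ (nbhd G A).powerset with Disjoint (crossEdges G A B) η, a ^ #B
      = (1 + a) ^ #(unblockedNbhd G A η) := by
  have hfilter : {B ∈ (nbhd G A).powerset | Disjoint (crossEdges G A B) η}
      = (unblockedNbhd G A η).powerset := by
    ext B
    rw [mem_filter, mem_powerset, disjoint_crossEdges_iff, mem_powerset]
    simp only [unblockedNbhd, subset_iff, mem_filter]
    exact ⟨fun h v hv => ⟨h.1 hv, h.2 v hv⟩,
      fun h => ⟨fun v hv => (h hv).1, fun v hv => (h hv).2⟩⟩
  rw [hfilter, sum_powerset_pow_card]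

variable {k : ℕ} (A : Fin k → Finset V)

lemma sum_piFinset_eq_sum_subsetLaw_mul_prod (lam q : ℝ) :
    ∑ B ∈ Fintype.piFinset fun i => (nbhd G (A i)).powerset,
        (∏ i, lam ^ #(B i)) * q ^ #(univ.biUnion fun i => crossEdges G (A i) (B i))
      = ∑ η ∈ (edgeFins G).powerset,
          subsetLaw (edgeFins G) q η * ∏ i, (1 + lam) ^ #(unblockedNbhd G (A i) η) := by
  have hsub : ∀ B : Fin k → Finset V,
      univ.biUnion (fun i => crossEdges G (A i) (B i)) ⊆ edgeFins G :=
    fun B => biUnion_subset.2 fun i _ => crossEdges_subset_edgeFins G _ _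
  calc _ = ∑ B ∈ Fintype.piFinset fun i => (nbhd G (A i)).powerset,
        ∑ η ∈ (edgeFins G).powerset, subsetLaw (edgeFins G) q η *
          ∏ i, if Disjoint (crossEdges G (A i) (B i)) η then lam ^ #(B i) else 0 := by
        refine sum_congr rfl fun B _ => ?_
        rw [← sum_subsetLaw_filter_disjoint (hsub B), sum_filter, mul_sum]
        refine sum_congr rfl fun η _ => ?_
        rw [prod_ite_zero]
        simp only [disjoint_biUnion_left, mem_univ, true_implies]
        split_ifs <;> ring
    _ = _ := by
        rw [sum_comm]
        refine sum_congr rfl fun η _ => ?_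
        rw [← mul_sum]
        refine congrArg _ ((prod_univ_sum (fun i => (nbhd G (A i)).powerset) fun i B =>
          if Disjoint (crossEdges G (A i) B) η then lam ^ #B else 0).symm.trans
            (prod_congr rfl fun i _ => ?_))
        rw [← sum_filter, sum_pow_card_filter_disjoint_crossEdges]

lemma sum_subsetLaw_mul_pow_card_unblockedNbhd_le {A : Finset V} (hA : Disjoint A (nbhd G A))
    {c q : ℝ} (hc : 0 ≤ c) (hq0 : 0 ≤ q) (hq1 : q ≤ 1) :
    ∑ η ∈ (edgeFins G).powerset,
        subsetLaw (edgeFins G) q η * (1 + c) ^ #(unblockedNbhd G A η)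
      ≤ (1 + c * q) ^ #(nbhd G A) := by
  calc _ = ∑ S ∈ (nbhd G A).powerset, c ^ #S *
        ∑ η ∈ (edgeFins G).powerset with Disjoint (crossEdges G A S) η,
          subsetLaw (edgeFins G) q η := by
        simp only [← sum_pow_card_filter_disjoint_crossEdges, sum_filter, mul_sum]
        rw [sum_comm]
        refine sum_congr rfl fun S _ => sum_congr rfl fun η _ => ?_
        split_ifs <;> ring
    _ = ∑ S ∈ (nbhd G A).powerset, c ^ #S * q ^ #(crossEdges G A S) :=
        sum_congr rfl fun S _ => by
          rw [sum_subsetLaw_filter_disjoint (crossEdges_subset_edgeFins G _ _)]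
    _ ≤ ∑ S ∈ (nbhd G A).powerset, (c * q) ^ #S := by
        refine sum_le_sum fun S hS => ?_
        have hSN := mem_powerset.1 hS
        rw [mul_pow]
        exact mul_le_mul_of_nonneg_left (pow_le_pow_of_le_one hq0 hq1
          (card_le_card_crossEdges G hSN (hA.mono_right hSN))) (pow_nonneg hc _)
    _ = _ := sum_powerset_pow_card _ _

theorem sum_piFinset_prod_pow_mul_pow_card_crossEdges_le (hk : k ≠ 0)
    (hA : ∀ i, Disjoint (A i) (nbhd G (A i))) {lam q : ℝ} (hlam : 0 ≤ lam) (hq0 : 0 ≤ q)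
    (hq1 : q ≤ 1) :
    ∑ B ∈ Fintype.piFinset fun i => (nbhd G (A i)).powerset,
        (∏ i, lam ^ #(B i)) * q ^ #(univ.biUnion fun i => crossEdges G (A i) (B i))
      ≤ ((1 + ((1 + lam) ^ k - 1) * q) ^ (1 / k : ℝ)) ^ ∑ i, #(nbhd G (A i)) := by
  have hc : 0 ≤ (1 + lam) ^ k - 1 := sub_nonneg.2 (one_le_pow₀ (by linarith))
  have hmoment : ∀ i, ∑ η ∈ (edgeFins G).powerset, subsetLaw (edgeFins G) q η *
      ((1 + lam) ^ #(unblockedNbhd G (A i) η)) ^ k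
        ≤ (1 + ((1 + lam) ^ k - 1) * q) ^ #(nbhd G (A i)) :=
    fun i => by
      simpa only [add_sub_cancel, ← pow_mul, mul_comm k] using
        sum_subsetLaw_mul_pow_card_unblockedNbhd_le G (hA i) hc hq0 hq1
  have hM : ∀ i, 0 ≤ ∑ η ∈ (edgeFins G).powerset, subsetLaw (edgeFins G) q η *
      ((1 + lam) ^ #(unblockedNbhd G (A i) η)) ^ k :=
    fun i => sum_nonneg fun η _ => mul_nonneg (subsetLaw_nonneg _ hq0 hq1 η) (by positivity)
  have hbase : 0 ≤ 1 + ((1 + lam) ^ k - 1) * q := add_nonneg zero_le_one (mul_nonneg hc hq0)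
  rw [sum_piFinset_eq_sum_subsetLaw_mul_prod]
  calc _ ≤ ∏ i, (∑ η ∈ (edgeFins G).powerset, subsetLaw (edgeFins G) q η *
          ((1 + lam) ^ #(unblockedNbhd G (A i) η)) ^ k) ^ (1 / k : ℝ) :=
        sum_mul_prod_le_prod_Lp _ hk _ _ (fun η _ => subsetLaw_nonneg _ hq0 hq1 η)
          fun i η _ => by positivity
    _ ≤ ∏ i, ((1 + ((1 + lam) ^ k - 1) * q) ^ #(nbhd G (A i))) ^ (1 / k : ℝ) :=
        prod_le_prod (fun i _ => Real.rpow_nonneg (hM i) _) fun i _ =>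
          Real.rpow_le_rpow (hM i) (hmoment i) (by positivity)
    _ = _ := by
        rw [← prod_pow_eq_pow_sum]
        exact prod_congr rfl fun i _ => (Real.rpow_pow_comm hbase _ _).symm

end CrossEdges

section Hypercube

lemma card_filter_true_add_card_filter_true {ι : Type*} [Fintype ι] (u v : ι → Bool) :
    #{i | u i = true} + #{i | v i = true}
      = #{i | u i ≠ v i} + 2 * #{i | u i = true ∧ v i = true} := by
  simp only [card_filter, ← sum_add_distrib, mul_sum]
  refine sum_congr rfl fun i _ => ?_
  cases u i <;> cases v i <;> rfl

lemma hypercube_adj_parity_ne {d : ℕ} {u v : Fin d → Bool} (h : (hypercube d).Adj u v) :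
    #{i | u i = true} % 2 ≠ #{i | v i = true} % 2 := by
  have h1 : #{i | u i ≠ v i} = 1 := h
  have := card_filter_true_add_card_filter_true u v
  omega

lemma disjoint_nbhd_hypercube {d : ℕ} {A : Finset (Fin d → Bool)}
    (hA : A ⊆ evenV d ∨ A ⊆ oddV d) : Disjoint A (nbhd (hypercube d) A) := by
  refine disjoint_left.2 fun v hvA hvN => ?_
  obtain ⟨u, huA, huv⟩ : ∃ u ∈ A, (hypercube d).Adj u v := by simpa [nbhd] using hvN
  apply hypercube_adj_parity_ne huv
  rcases hA with h | h <;> have hu := (mem_filter.1 (h huA)).2 <;>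
    have hv := (mem_filter.1 (h hvA)).2 <;> omega

end Hypercube

lemma polymerWeight_eq (d k : ℕ) (lam beta : ℝ) (A : Fin k → Finset (Fin d → Bool)) :
    polymerWeight d k lam beta A
      = lam ^ (∑ i, #(A i)) / (1 + lam) ^ (∑ i, #(nbhd (hypercube d) (A i))) *
        ∑ B ∈ Fintype.piFinset fun i => (nbhd (hypercube d) (A i)).powerset,
          (∏ i, lam ^ #(B i)) * Real.exp (-beta) ^
            #(univ.biUnion fun i => crossEdges (hypercube d) (A i) (B i)) := by
  have hdom : univ.filter (fun B : Fin k → Finset (Fin d → Bool) =>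
        ∀ i, B i ⊆ nbhd (hypercube d) (A i))
      = Fintype.piFinset fun i => (nbhd (hypercube d) (A i)).powerset := by
    ext B
    simp
  rw [polymerWeight, hdom, mul_sum]
  refine sum_congr rfl fun B _ => ?_
  rw [pow_add, prod_pow_eq_pow_sum, mul_comm (-beta), Real.exp_nat_mul]
  ring

theorem statement15_general (d k : ℕ) (hk : 1 ≤ k) (lam beta : ℝ)
    (hlam : 0 < lam) (hbeta : 0 ≤ beta)
    (A : Fin k → Finset (Fin d → Bool)) (hA : IsPolymer d k A) :
    polymerWeight d k lam beta A ≤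
      lam ^ (∑ i, (A i).card) *
        (((1 + ((1 + lam) ^ k - 1) * Real.exp (-beta)) / (1 + lam) ^ k) ^ ((1 : ℝ) / k))
          ^ (∑ i, (nbhd (hypercube d) (A i)).card) := by
  have hq1 : Real.exp (-beta) ≤ 1 := Real.exp_le_one_iff.2 (neg_nonpos.2 hbeta)
  have hsum := sum_piFinset_prod_pow_mul_pow_card_crossEdges_le (hypercube d) A (by omega)
    (fun i => disjoint_nbhd_hypercube (hA.1 i)) hlam.le (Real.exp_pos _).le hq1
  have hc : 0 ≤ 1 + ((1 + lam) ^ k - 1) * Real.exp (-beta) :=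
    add_nonneg zero_le_one (mul_nonneg (sub_nonneg.2 (one_le_pow₀ (by linarith))) (by positivity))
  rw [polymerWeight_eq]
  calc _ ≤ lam ^ (∑ i, #(A i)) / (1 + lam) ^ (∑ i, #(nbhd (hypercube d) (A i))) *
        ((1 + ((1 + lam) ^ k - 1) * Real.exp (-beta)) ^ (1 / k : ℝ))
          ^ ∑ i, #(nbhd (hypercube d) (A i)) :=
        mul_le_mul_of_nonneg_left hsum (by positivity)
    _ = _ := by
        rw [Real.div_rpow hc (by positivity), one_div,
          Real.pow_rpow_inv_natCast (by positivity) (by omega), div_pow]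
        ring

theorem statement15 (d k : ℕ) (hd : 1 ≤ d) (hk : 1 ≤ k) (lam beta : ℝ)
    (hlam : 0 < lam) (hbeta : 0 ≤ beta)
    (A : Fin k → Finset (Fin d → Bool)) (hA : IsPolymer d k A) :
    polymerWeight d k lam beta A ≤
      lam ^ (∑ i, (A i).card) *
        (((1 + ((1 + lam) ^ k - 1) * Real.exp (-beta)) / (1 + lam) ^ k) ^ ((1 : ℝ) / k))
          ^ (∑ i, (nbhd (hypercube d) (A i)).card) :=
  statement15_general d k hk lam beta hlam hbeta A hA
end
end

section
/- Fix p ∈ (0,1) and c > 0, and for x > 0 set α_x := 1 − p(1 − e^{−cx}). Then the function x ↦ α_x^{1/x} is increasing on (0,∞). -/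
/-!
Write `α_x = (1 - p) + p e^{-cx}` and `φ(x) = log α_x`, so that `α_x^{1/x} = exp (φ(x) / x)`.
The function `φ` is strictly convex, its second derivative being
`c² p (1 - p) e^{-cx} / α_x² > 0`, and `φ(0) = 0`; hence `φ(x) / x`, the slope of the secant
of `φ` through `0`, is strictly increasing.
-/

open Real Set

theorem StrictConvexOn.strictMonoOn_div_self {s : Set ℝ} {f : ℝ → ℝ}
    (hf : StrictConvexOn ℝ s f) (h0 : (0 : ℝ) ∈ s) (hf0 : f 0 = 0) :
    StrictMonoOn (fun x => f x / x) (s \ {0}) := by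
  rintro x ⟨hx, hx0⟩ y ⟨hy, hy0⟩ hxy
  simpa [hf0] using hf.secant_strict_mono h0 hx hy hx0 hy0 hxy

theorem hasDerivAt_exp_mul (k t : ℝ) : HasDerivAt (fun t => exp (k * t)) (exp (k * t) * k) t :=
  ((hasDerivAt_id t).const_mul k).exp.congr_deriv (by simp)

section LogAddMulExp

variable {a b k : ℝ}

theorem hasDerivAt_log_add_mul_exp (ha : 0 < a) (hb : 0 < b) (t : ℝ) :
    HasDerivAt (fun t => log (a + b * exp (k * t)))
      (k * b * exp (k * t) / (a + b * exp (k * t))) t := by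
  have hpos : 0 < a + b * exp (k * t) := by positivity
  convert ((hasDerivAt_exp_mul k t).const_mul b).const_add a |>.log hpos.ne' using 1
  ring

theorem strictConvexOn_log_add_mul_exp (ha : 0 < a) (hb : 0 < b) (hk : k ≠ 0) :
    StrictConvexOn ℝ univ (fun t => log (a + b * exp (k * t))) := by
  have hpos : ∀ t, 0 < a + b * exp (k * t) := fun t => by positivity
  refine strictConvexOn_univ_of_deriv2_pos
    (by fun_prop (disch := exact fun t => (hpos t).ne')) fun t => ?_
  have hderiv : deriv (fun t => log (a + b * exp (k * t))) =
      fun t => k * b * exp (k * t) / (a + b * exp (k * t)) :=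
    funext fun t => (hasDerivAt_log_add_mul_exp ha hb t).deriv
  have hderiv2 := ((hasDerivAt_exp_mul k t).const_mul (k * b)).fun_div
    (((hasDerivAt_exp_mul k t).const_mul b).const_add a) (hpos t).ne'
  rw [Function.iterate_succ_apply, Function.iterate_one, hderiv, hderiv2.deriv]
  have : 0 < k ^ 2 * a * b * exp (k * t) / (a + b * exp (k * t)) ^ 2 := by positivity
  convert this using 1
  field_simp
  ring

end LogAddMulExp

theorem statement17 (p c : ℝ) (hp0 : 0 < p) (hp1 : p < 1) (hc : 0 < c) :
    StrictMonoOn (fun x : ℝ => (1 - p * (1 - Real.exp (-c * x))) ^ (1 / x))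
      (Set.Ioi (0 : ℝ)) := by
  have hα : ∀ x, 1 - p * (1 - exp (-c * x)) = (1 - p) + p * exp (-c * x) :=
    fun x => by ring
  have hslope := (strictConvexOn_log_add_mul_exp (sub_pos.2 hp1) hp0
    (neg_ne_zero.2 hc.ne')).strictMonoOn_div_self (mem_univ 0) (by simp)
  intro x hx y hy hxy
  simp only [hα]
  rw [rpow_def_of_pos (by positivity), rpow_def_of_pos (by positivity), exp_lt_exp,
    mul_one_div, mul_one_div]
  exact hslope ⟨mem_univ x, hx.ne'⟩ ⟨mem_univ y, hy.ne'⟩ hxy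
end

section
/- Fix p ∈ (0,1) and c > 0, and for x > 0 set α_x := 1 − p(1 − e^{−cx}) and f(x) := (2α_x)^{1/x}. If p ≤ 1/2, then f is strictly decreasing on (0,∞). If p > 1/2, then there exists x* ∈ (0,∞) such that f is strictly decreasing on (0, x*] and strictly increasing on [x*, ∞). -/
/-!
Write `A x = 2 α_x`. Since `f x = exp (log (A x) / x)`, the sign of `f'` is that of
`x² (log A / x)' = φ x := x A'(x) / A(x) - log (A x)`. Here `φ 0 = -log 2 < 0` and
`φ' x = 4 c² p (1 - p) x e^{-cx} / A(x)² > 0`, so `φ` increases strictly towards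
`-log (2 (1 - p))`. For `p ≤ 1/2` this limit is `≤ 0`, so `φ < 0` on `(0, ∞)`; for `p > 1/2`
it is positive, and `x*` is the unique zero of `φ`.
-/

open Real Set Filter Topology

theorem hasDerivAt_log_div_self {a : ℝ → ℝ} {a' x : ℝ} (ha : HasDerivAt a a' x)
    (hax : 0 < a x) (hx : x ≠ 0) :
    HasDerivAt (fun y => log (a y) / y) ((x * a' / a x - log (a x)) / x ^ 2) x := by
  refine ((ha.log hax.ne').div (hasDerivAt_id' x) hx).congr_deriv ?_
  field_simp

theorem eqOn_exp_log_div_self_rpow_one_div {a : ℝ → ℝ} {s : Set ℝ} (ha : ∀ x ∈ s, 0 < a x) :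
    EqOn (fun x => exp (log (a x) / x)) (fun x => a x ^ (1 / x)) s := fun x hx => by
  simp only [rpow_def_of_pos (ha x hx), mul_one_div]

section RpowOneDiv

variable {a a' : ℝ → ℝ} {s : Set ℝ}

theorem strictAntiOn_rpow_one_div (hs : Convex ℝ s) (hs0 : s ⊆ Ioi 0)
    (ha : ∀ x ∈ s, HasDerivAt a (a' x) x) (hpos : ∀ x ∈ s, 0 < a x)
    (hneg : ∀ x ∈ interior s, x * a' x / a x - log (a x) < 0) :
    StrictAntiOn (fun x => a x ^ (1 / x)) s := by
  have hG (x) (hx : x ∈ s) := hasDerivAt_log_div_self (ha x hx) (hpos x hx) (hs0 hx).ne'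
  have hanti : StrictAntiOn (fun x => log (a x) / x) s :=
    strictAntiOn_of_hasDerivWithinAt_neg hs
      (fun x hx => (hG x hx).continuousAt.continuousWithinAt)
      (fun x hx => (hG x (interior_subset hx)).hasDerivWithinAt) fun x hx =>
        div_neg_of_neg_of_pos (hneg x hx) (pow_pos (hs0 (interior_subset hx)) 2)
  exact (exp_strictMono.comp_strictAntiOn hanti).congr
    (eqOn_exp_log_div_self_rpow_one_div hpos)

theorem strictMonoOn_rpow_one_div (hs : Convex ℝ s) (hs0 : s ⊆ Ioi 0)
    (ha : ∀ x ∈ s, HasDerivAt a (a' x) x) (hpos : ∀ x ∈ s, 0 < a x)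
    (hpos' : ∀ x ∈ interior s, 0 < x * a' x / a x - log (a x)) :
    StrictMonoOn (fun x => a x ^ (1 / x)) s := by
  have hG (x) (hx : x ∈ s) := hasDerivAt_log_div_self (ha x hx) (hpos x hx) (hs0 hx).ne'
  have hmono : StrictMonoOn (fun x => log (a x) / x) s :=
    strictMonoOn_of_hasDerivWithinAt_pos hs
      (fun x hx => (hG x hx).continuousAt.continuousWithinAt)
      (fun x hx => (hG x (interior_subset hx)).hasDerivWithinAt) fun x hx =>
        div_pos (hpos' x hx) (pow_pos (hs0 (interior_subset hx)) 2)
  exact (exp_strictMono.comp_strictMonoOn hmono).congr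
    (eqOn_exp_log_div_self_rpow_one_div hpos)

end RpowOneDiv

namespace TwoAlpha

noncomputable def base (p c x : ℝ) : ℝ := 2 * (1 - p * (1 - exp (-c * x)))

noncomputable def phi (p c x : ℝ) : ℝ :=
  x * (-2 * c * p * exp (-c * x)) / base p c x - log (base p c x)

variable {p c : ℝ}

theorem base_pos (hp0 : 0 < p) (hp1 : p < 1) (x : ℝ) : 0 < base p c x := by
  have := exp_pos (-c * x)
  unfold base
  nlinarith

theorem hasDerivAt_base (p c x : ℝ) :
    HasDerivAt (base p c) (-2 * c * p * exp (-c * x)) x := by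
  have h := ((((hasDerivAt_id' x).const_mul (-c)).exp.const_sub 1).const_mul p).const_sub 1
  exact (h.const_mul 2).congr_deriv (by ring)

theorem hasDerivAt_phi (hp0 : 0 < p) (hp1 : p < 1) (x : ℝ) :
    HasDerivAt (phi p c)
      (4 * c ^ 2 * p * (1 - p) * x * exp (-c * x) / base p c x ^ 2) x := by
  have hA := base_pos (c := c) hp0 hp1 x
  have hE := ((hasDerivAt_id' x).const_mul (-c)).exp.const_mul (-2 * c * p)
  have h := (((hasDerivAt_id' x).mul hE).div (hasDerivAt_base p c x) hA.ne').sub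
    ((hasDerivAt_base p c x).log hA.ne')
  refine h.congr_deriv ?_
  simp only [Pi.mul_apply, base]
  field_simp
  ring

theorem phi_zero : phi p c 0 = -log 2 := by
  simp [phi, base]

theorem strictMonoOn_phi (hp0 : 0 < p) (hp1 : p < 1) (hc : 0 < c) :
    StrictMonoOn (phi p c) (Ici 0) := by
  refine strictMonoOn_of_hasDerivWithinAt_pos (convex_Ici 0)
    (fun x _ => (hasDerivAt_phi hp0 hp1 x).continuousAt.continuousWithinAt)
    (fun x _ => (hasDerivAt_phi hp0 hp1 x).hasDerivWithinAt) fun x hx => ?_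
  have hx0 : 0 < x := by simpa using hx
  have h1p : 0 < 1 - p := sub_pos.2 hp1
  have hA := base_pos (c := c) hp0 hp1 x
  have hE := exp_pos (-c * x)
  exact div_pos (by positivity) (by positivity)

theorem tendsto_phi_atTop (hp1 : p < 1) (hc : 0 < c) :
    Tendsto (phi p c) atTop (𝓝 (-log (2 * (1 - p)))) := by
  have hE : Tendsto (fun x => exp (-c * x)) atTop (𝓝 0) := by
    simpa using tendsto_rpow_mul_exp_neg_mul_atTop_nhds_zero 0 c hc
  have hxE : Tendsto (fun x => x * exp (-c * x)) atTop (𝓝 0) := by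
    simpa using tendsto_rpow_mul_exp_neg_mul_atTop_nhds_zero 1 c hc
  have hA : Tendsto (base p c) atTop (𝓝 (2 * (1 - p))) := by
    have h := (((hE.const_sub 1).const_mul p).const_sub 1).const_mul 2
    rwa [sub_zero, mul_one] at h
  have hL : 2 * (1 - p) ≠ 0 := by linarith
  have h := ((hxE.mul_const (-2 * c * p)).div hA hL).sub ((continuousAt_log hL).tendsto.comp hA)
  rw [zero_mul, zero_div, zero_sub] at h
  refine h.congr fun x => ?_
  simp only [phi, Pi.div_apply, Function.comp]
  ring

theorem phi_neg_of_le_half (hp0 : 0 < p) (hp : p ≤ 1 / 2) (hc : 0 < c) {x : ℝ} (hx : 0 < x) :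
    phi p c x < 0 := by
  have hA := base_pos (c := c) hp0 (by linarith) x
  have hE := exp_pos (-c * x)
  have hE1 : exp (-c * x) < 1 := exp_lt_one_iff.2 (by nlinarith)
  have hlog : 0 < log (base p c x) := log_pos (by unfold base; nlinarith)
  have hfrac : x * (-2 * c * p * exp (-c * x)) / base p c x < 0 :=
    div_neg_of_neg_of_pos (by nlinarith [mul_pos (mul_pos hc hp0) (mul_pos hx hE)]) hA
  exact (sub_lt_self _ hlog).trans hfrac

theorem exists_phi_sign_change (hp1 : p < 1) (hp : 1 / 2 < p) (hc : 0 < c) :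
    ∃ xs, 0 < xs ∧ (∀ x ∈ Ioo 0 xs, phi p c x < 0) ∧ ∀ x ∈ Ioi xs, 0 < phi p c x := by
  have hp0 : 0 < p := by linarith
  have hlim : 0 < -log (2 * (1 - p)) := neg_pos.2 (log_neg (by linarith) (by linarith))
  have hphi0 : phi p c 0 < 0 := by
    rw [phi_zero]
    exact neg_neg_of_pos (log_pos one_lt_two)
  obtain ⟨X, hX, hX0⟩ :=
    (((tendsto_phi_atTop hp1 hc).eventually (eventually_gt_nhds hlim)).and
      (eventually_ge_atTop 0)).exists
  obtain ⟨xs, hxs, hroot⟩ := intermediate_value_Icc hX0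
    (fun x _ => (hasDerivAt_phi hp0 hp1 x).continuousAt.continuousWithinAt)
    ⟨hphi0.le, hX.le⟩
  have hxs0 : 0 < xs := hxs.1.lt_of_ne fun h => by rw [← h] at hroot; linarith
  have hmono := strictMonoOn_phi hp0 hp1 hc
  refine ⟨xs, hxs0, fun x hx => ?_, fun x hx => ?_⟩
  · exact hroot ▸ hmono hx.1.le hxs0.le hx.2
  · exact hroot ▸ hmono hxs0.le (hxs0.trans hx).le hx

end TwoAlpha

open TwoAlpha in
theorem statement18 (p c : ℝ) (hp0 : 0 < p) (hp1 : p < 1) (hc : 0 < c) :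
    (p ≤ 1 / 2 →
      StrictAntiOn (fun x : ℝ => (2 * (1 - p * (1 - Real.exp (-c * x)))) ^ (1 / x))
        (Set.Ioi (0 : ℝ))) ∧
    (1 / 2 < p →
      ∃ xs : ℝ, 0 < xs ∧
        StrictAntiOn (fun x : ℝ => (2 * (1 - p * (1 - Real.exp (-c * x)))) ^ (1 / x))
          (Set.Ioc (0 : ℝ) xs) ∧
        StrictMonoOn (fun x : ℝ => (2 * (1 - p * (1 - Real.exp (-c * x)))) ^ (1 / x))
          (Set.Ici xs)) := by
  have hderiv (s : Set ℝ) : ∀ x ∈ s, HasDerivAt (base p c) (-2 * c * p * exp (-c * x)) x :=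
    fun x _ => hasDerivAt_base p c x
  have hbase (s : Set ℝ) : ∀ x ∈ s, 0 < base p c x := fun x _ => base_pos hp0 hp1 x
  refine ⟨fun hp => ?_, fun hp => ?_⟩
  · exact strictAntiOn_rpow_one_div (convex_Ioi 0) subset_rfl (hderiv _) (hbase _)
      fun x hx => phi_neg_of_le_half hp0 hp hc (by simpa using hx)
  · obtain ⟨xs, hxs0, hneg, hpos⟩ := exists_phi_sign_change hp1 hp hc
    refine ⟨xs, hxs0, ?_, ?_⟩
    · exact strictAntiOn_rpow_one_div (convex_Ioc 0 xs) Ioc_subset_Ioi_self (hderiv _)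
        (hbase _) fun x hx => hneg x (by simpa using hx)
    · exact strictMonoOn_rpow_one_div (convex_Ici xs) (fun x hx => hxs0.trans_le hx) (hderiv _)
        (hbase _) fun x hx => hpos x (by simpa using hx)
end

section
/- Fix p ∈ (0,1) and c > 0, and for x > 0 set α_x := 1 − p(1 − e^{−cx}) and f(x) := (2α_x)^{1/x}. Then for every integer n ≥ 1 and all reals x' ≥ x₁, …, x_n ≥ x > 0, ∏_{i=1}^{n} (2α_{x_i}) ≤ (max{f(x), f(x')})^{x₁+⋯+x_n}. -/
/-!
Writing `α_t = a + b e^{-ct}` with `a = 2 - 2p > 0` and `b = 2p ≥ 0`, the function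
`t ↦ log α_t` is convex (it is a log-sum-exp of affine functions). With `M = max (f x) (f x')`,
the endpoint bounds `log α_x ≤ x log M` and `log α_{x'} ≤ x' log M` therefore propagate to
`log α_t ≤ t log M` for every `t ∈ [x, x']`, i.e. `α_t ≤ M ^ t`. Multiplying these bounds over
the `x_i` gives the claim, since `∏ M ^ {x_i} = M ^ {∑ x_i}`.
-/

open Real Set

theorem ConvexOn.le_of_mem_segment_of_concaveOn {𝕜 E : Type*} [Field 𝕜] [LinearOrder 𝕜]
    [IsStrictOrderedRing 𝕜] [AddCommGroup E] [Module 𝕜 E] {s : Set E} {f g : E → 𝕜}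
    (hf : ConvexOn 𝕜 s f) (hg : ConcaveOn 𝕜 s g) {x y z : E} (hx : x ∈ s) (hy : y ∈ s)
    (hfgx : f x ≤ g x) (hfgy : f y ≤ g y) (hz : z ∈ segment 𝕜 x y) : f z ≤ g z := by
  have h := (hf.sub hg).le_on_segment hx hy hz
  simp only [Pi.sub_apply] at h
  exact sub_nonpos.1 (h.trans (max_le (sub_nonpos.2 hfgx) (sub_nonpos.2 hfgy)))

theorem convexOn_log_add_mul_exp {a b : ℝ} (ha : 0 < a) (hb : 0 ≤ b) :
    ConvexOn ℝ univ (fun s => log (a + b * exp s)) := by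
  have hpos : ∀ s, 0 < a + b * exp s := fun s => by positivity
  have hderiv : ∀ s, HasDerivAt (fun s => log (a + b * exp s))
      (b * exp s / (a + b * exp s)) s := fun s => by
    simpa using (((hasDerivAt_exp s).const_mul b).const_add a).log (hpos s).ne'
  refine Monotone.convexOn_univ_of_deriv (fun s => (hderiv s).differentiableAt) fun s t hst => ?_
  rw [(hderiv s).deriv, (hderiv t).deriv, div_le_div_iff₀ (hpos s) (hpos t)]
  have hexp : exp s ≤ exp t := exp_le_exp.2 hst
  nlinarith [mul_le_mul_of_nonneg_left hexp (mul_nonneg ha.le hb)]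

theorem convexOn_log_add_mul_exp_mul {a b : ℝ} (ha : 0 < a) (hb : 0 ≤ b) (k : ℝ) :
    ConvexOn ℝ univ (fun t => log (a + b * exp (k * t))) :=
  (convexOn_log_add_mul_exp ha hb).comp_linearMap (LinearMap.mulLeft ℝ k)

theorem le_rpow_of_convexOn_log {φ : ℝ → ℝ} {x y t M : ℝ}
    (hφ : ConvexOn ℝ (Icc x y) (fun s => log (φ s))) (hpos : ∀ s ∈ Icc x y, 0 < φ s)
    (hM : 0 < M) (hx : φ x ≤ M ^ x) (hy : φ y ≤ M ^ y) (ht : t ∈ Icc x y) : φ t ≤ M ^ t := by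
  have hxy : x ≤ y := ht.1.trans ht.2
  have hlog : ∀ s ∈ Icc x y, φ s ≤ M ^ s ↔ log (φ s) ≤ log M * s := fun s hs => by
    rw [← log_le_log_iff (hpos s hs) (rpow_pos_of_pos hM s), log_rpow hM, mul_comm]
  have hxs : x ∈ Icc x y := left_mem_Icc.2 hxy
  have hys : y ∈ Icc x y := right_mem_Icc.2 hxy
  refine (hlog t ht).2 <| hφ.le_of_mem_segment_of_concaveOn
    ((LinearMap.mulLeft ℝ (log M)).concaveOn (convex_Icc x y)) hxs hys
    ((hlog x hxs).1 hx) ((hlog y hys).1 hy) ?_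
  rwa [segment_eq_Icc hxy]

theorem statement19_general (p c : ℝ) (hp0 : 0 < p) (hp1 : p < 1)
    (n : ℕ) (x x' : ℝ) (xs : Fin n → ℝ) (hx : 0 < x)
    (hlo : ∀ i, x ≤ xs i) (hhi : ∀ i, xs i ≤ x') :
    ∏ i, (2 * (1 - p * (1 - Real.exp (-c * xs i)))) ≤
      (max ((2 * (1 - p * (1 - Real.exp (-c * x)))) ^ (1 / x))
          ((2 * (1 - p * (1 - Real.exp (-c * x')))) ^ (1 / x'))) ^ (∑ i, xs i) := by
  set α : ℝ → ℝ := fun t => 2 * (1 - p * (1 - exp (-c * t)))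
  have hα : α = fun t => (2 - 2 * p) + 2 * p * exp (-c * t) := by funext t; ring
  have hαpos : ∀ t, 0 < α t := fun t => by
    rw [hα]; exact add_pos_of_pos_of_nonneg (by linarith) (by positivity)
  have hconv : ConvexOn ℝ univ (fun t => log (α t)) := by
    rw [hα]; exact convexOn_log_add_mul_exp_mul (by linarith) (by positivity) (-c)
  set M := max (α x ^ (1 / x)) (α x' ^ (1 / x'))
  have hM : 0 < M := lt_max_of_lt_left (rpow_pos_of_pos (hαpos x) _)
  have hend : ∀ y, 0 < y → α y ^ (1 / y) ≤ M → α y ≤ M ^ y := fun y hy h => by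
    rwa [one_div, rpow_inv_le_iff_of_pos (hαpos y).le hM.le hy] at h
  have hbound : ∀ i, α (xs i) ≤ M ^ xs i := fun i =>
    le_rpow_of_convexOn_log (hconv.subset (subset_univ _) (convex_Icc x x'))
      (fun s _ => hαpos s) hM (hend x hx (le_max_left _ _))
      (hend x' (hx.trans_le ((hlo i).trans (hhi i))) (le_max_right _ _)) ⟨hlo i, hhi i⟩
  calc ∏ i, α (xs i) ≤ ∏ i, M ^ xs i :=
        Finset.prod_le_prod (fun i _ => (hαpos _).le) fun i _ => hbound i
    _ = M ^ ∑ i, xs i := (rpow_sum_of_pos hM _ _).symm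

theorem statement19 (p c : ℝ) (hp0 : 0 < p) (hp1 : p < 1) (hc : 0 < c)
    (n : ℕ) (hn : 1 ≤ n) (x x' : ℝ) (xs : Fin n → ℝ) (hx : 0 < x)
    (hlo : ∀ i, x ≤ xs i) (hhi : ∀ i, xs i ≤ x') :
    ∏ i, (2 * (1 - p * (1 - Real.exp (-c * xs i)))) ≤
      (max ((2 * (1 - p * (1 - Real.exp (-c * x)))) ^ (1 / x))
          ((2 * (1 - p * (1 - Real.exp (-c * x')))) ^ (1 / x'))) ^ (∑ i, xs i) :=
  statement19_general p c hp0 hp1 n x x' xs hx hlo hhi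
end
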